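/- arXiv:2207.13319 — 2 statements merged into one kernel-verified Lean document; each statement's English description precedes it below -/
import Mathlib

section
/- Among forecasts of the form Ŷ_s = α + λᵀU(s) + βᵀX_s subject to the weak-demographic-parity constraint cov[Ŷ_S, U(S)] = 0, the squared loss E[(Ŷ_S − Y_S)²] is minimized by the SEO forecast: β = β_F, λ = −Mβ_F, α = α_F, where M = var[U(S)]⁻¹cov[U(S), X_S]. -/
/-!
Write `F = a + λᵀU + bᵀX`. Since `cov[F, U] = var[U] λ + cov[U, X] b` and `var[U]` is invertible
(it is `diag q - q qᵀ` for the dummy probabilities `q`, with determinant the product of all group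
probabilities), the constraint forces `λ = -M b`. In the mixture model `M` is the matrix of mean
contrasts `μ_k - μ_last`, so `(M b)ᵀ U(s) = bᵀ (μ_s - μ̄)` pointwise, and every constrained
forecast is `F = (a + bᵀμ̄) + bᵀ(X - μ_S)`, a linear forecast from the within-group deviations
`X - μ_S`. These are uncorrelated with every function of `S` and have covariance `∑ p_s Σ_s`, so
the squared loss is minimized by the best linear predictor from them, whose coefficient solves
the normal equations `(∑ p_s Σ_s) β = cov[X - μ_S, Y]`: this is `β_F`.
-/

open MeasureTheory Matrix Finset ProbabilityTheory

theorem Matrix.det_diagonal_sub_vecMulVec_self {m R : Type*} [Fintype m] [DecidableEq m]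
    [CommRing R] (q : m → R) :
    (diagonal q - vecMulVec q q).det = (∏ i, q i) * (1 - ∑ i, q i) := by
  have h : diagonal q - vecMulVec q q = diagonal q * (1 + vecMulVec (-1) q) := by
    rw [mul_add, mul_one, mul_vecMulVec]
    ext i j
    simp [mulVec_diagonal, vecMulVec_apply, sub_eq_add_neg]
  rw [h, det_mul, det_diagonal, vecMulVec_eq Unit, det_one_add_replicateCol_mul_replicateRow]
  simp [dotProduct, sub_eq_add_neg]

theorem sum_mul_indicator_sub_mul {κ : Type*} [Fintype κ] [DecidableEq κ] (p : κ → ℝ) (a : κ)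
    (m : κ → ℝ) :
    ∑ s, p s * ((if s = a then 1 else 0) - p a) * m s = p a * (m a - ∑ s, p s * m s) := by
  simp only [mul_sub, sub_mul, mul_ite, mul_one, mul_zero, ite_mul, zero_mul,
    Finset.sum_sub_distrib, Finset.sum_ite_eq', Finset.mem_univ, if_true]
  rw [Finset.mul_sum]
  exact congrArg _ (Finset.sum_congr rfl fun s _ => by ring)

theorem sum_sub_last_mul_indicator_sub {n : ℕ} {p : Fin (n + 1) → ℝ} (hp : ∑ s, p s = 1)
    (m : Fin (n + 1) → ℝ) (s : Fin (n + 1)) :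
    ∑ k : Fin n, (m k.castSucc - m (Fin.last n))
        * ((if s = k.castSucc then 1 else 0) - p k.castSucc)
      = m s - ∑ t, p t * m t := by
  have h := Fin.sum_univ_castSucc
    fun t => (m t - m (Fin.last n)) * ((if s = t then 1 else 0) - p t)
  simp only [sub_self, zero_mul, add_zero] at h
  rw [← h]
  simp only [mul_sub, mul_ite, mul_one, mul_zero, Finset.sum_sub_distrib, Finset.sum_ite_eq,
    Finset.mem_univ, if_true, sub_mul, ← Finset.mul_sum, hp, mul_one]
  simp only [mul_comm (m _)]
  ring

section Fiber

variable {Ω κ E : Type*} [MeasurableSpace Ω] {P : Measure Ω} [MeasurableSpace κ]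
  [MeasurableSingletonClass κ] {S : Ω → κ} [NormedAddCommGroup E] [NormedSpace ℝ E]

theorem setIntegral_fiber_comp (hS : Measurable S) (F : κ → Ω → E) (s : κ) :
    ∫ ω in {ω | S ω = s}, F (S ω) ω ∂P = ∫ ω in {ω | S ω = s}, F s ω ∂P :=
  setIntegral_congr_fun (hS (measurableSet_singleton s)) fun ω hω => by
    rw [show S ω = s from hω]

variable [Fintype κ]

theorem integral_eq_sum_setIntegral_fiber (hS : Measurable S) {f : Ω → E}
    (hf : Integrable f P) : ∫ ω, f ω ∂P = ∑ s, ∫ ω in {ω | S ω = s}, f ω ∂P := by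
  have hA : ∀ s, MeasurableSet {ω | S ω = s} := fun s => hS (measurableSet_singleton s)
  have hcover : ⋃ s, {ω | S ω = s} = Set.univ :=
    Set.iUnion_eq_univ_iff.mpr fun ω => ⟨S ω, rfl⟩
  rw [← integral_iUnion_fintype hA
    (fun s t hst => Set.disjoint_left.mpr fun ω h1 h2 => hst (h1.symm.trans h2))
    (fun s => hf.integrableOn), hcover, setIntegral_univ]

variable [IsFiniteMeasure P]

theorem integral_comp_eq_sum (hS : Measurable S) (g : κ → ℝ) :
    ∫ ω, g (S ω) ∂P = ∑ s, P.real {ω | S ω = s} * g s := by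
  have hg : Integrable (fun ω => g (S ω)) P :=
    (MemLp.of_discrete.comp_of_map hS.aemeasurable).integrable le_rfl
  rw [integral_eq_sum_setIntegral_fiber hS hg]
  refine Finset.sum_congr rfl fun s _ => ?_
  rw [setIntegral_fiber_comp hS (fun t _ => g t), setIntegral_const, smul_eq_mul]

theorem integral_comp_mul_sub_eq_zero (hS : Measurable S) {f : Ω → ℝ} (hf : Integrable f P)
    {m : κ → ℝ} (hm : ∀ s, ∫ ω in {ω | S ω = s}, f ω ∂P = P.real {ω | S ω = s} * m s)
    (g : κ → ℝ) : ∫ ω, g (S ω) * (f ω - m (S ω)) ∂P = 0 := by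
  have hfm : Integrable (fun ω => f ω - m (S ω)) P :=
    hf.sub ((MemLp.of_discrete.comp_of_map hS.aemeasurable).integrable le_rfl)
  have hgfm : Integrable (fun ω => g (S ω) * (f ω - m (S ω))) P :=
    hfm.mul_of_top_right (MemLp.of_discrete.comp_of_map hS.aemeasurable)
  rw [integral_eq_sum_setIntegral_fiber hS hgfm]
  refine Finset.sum_eq_zero fun s _ => ?_
  rw [setIntegral_fiber_comp hS (fun t ω => g t * (f ω - m t)), integral_const_mul,
    integral_sub hf.integrableOn (integrable_const _), hm, setIntegral_const, smul_eq_mul,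
    sub_self, mul_zero]

end Fiber

section SecondMoments

variable {Ω ι κ : Type*} [MeasurableSpace Ω] {P : Measure Ω} [Fintype ι] [Fintype κ]

theorem memLp_two_of_integrable_sq [IsFiniteMeasure P] {f : Ω → ℝ}
    (h0 : Integrable (fun ω => f ω ^ 2) P) (h1 : Integrable (fun ω => (1 + f ω) ^ 2) P) :
    MemLp f 2 P := by
  have hf : AEStronglyMeasurable f P := by
    have h := (((h1.sub h0).sub (integrable_const 1)).div_const 2).aestronglyMeasurable
    convert h using 2 with ω
    simp only [Pi.sub_apply]
    ring
  exact (memLp_two_iff_integrable_sq hf).2 h0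

theorem memLp_of_integrable_sq_forecast [IsFiniteMeasure P] [DecidableEq κ]
    {U : ι → Ω → ℝ} {X : Ω → κ → ℝ} {Y : Ω → ℝ}
    (hint : ∀ (a : ℝ) (l : ι → ℝ) (b : κ → ℝ),
      Integrable (fun ω => (a + (∑ k, l k * U k ω) + b ⬝ᵥ X ω - Y ω) ^ 2) P) :
    MemLp Y 2 P ∧ ∀ j, MemLp (fun ω => X ω j) 2 P := by
  have hres : ∀ b, MemLp (fun ω => b ⬝ᵥ X ω - Y ω) 2 P := fun b =>
    memLp_two_of_integrable_sq (by simpa using hint 0 0 b)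
      (by simpa [add_sub_assoc] using hint 1 0 b)
  have hY : MemLp Y 2 P := by
    convert (hres 0).neg using 1
    ext ω
    simp
  refine ⟨hY, fun j => ?_⟩
  convert (hres (Pi.single j 1)).add hY using 1
  ext ω
  simp

variable [IsProbabilityMeasure P]

theorem covariance_eq_integral_mul_sub {X Y : Ω → ℝ} (hX : MemLp X 2 P) (hY : MemLp Y 2 P) :
    cov[X, Y; P] = (∫ ω, X ω * Y ω ∂P) - (∫ ω, X ω ∂P) * ∫ ω, Y ω ∂P :=
  covariance_eq_sub hX hY

theorem covariance_sum_mul_left {Z : ι → Ω → ℝ} {W : Ω → ℝ} (hZ : ∀ i, MemLp (Z i) 2 P)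
    (hW : MemLp W 2 P) (l : ι → ℝ) :
    cov[fun ω => ∑ i, l i * Z i ω, W; P] = ∑ i, l i * cov[Z i, W; P] := by
  rw [covariance_fun_sum_left (fun i => (hZ i).const_mul (l i)) hW]
  simp only [covariance_const_mul_left]

theorem covariance_dotProduct_left {Z : Ω → ι → ℝ} {W : Ω → ℝ}
    (hZ : ∀ i, MemLp (fun ω => Z ω i) 2 P) (hW : MemLp W 2 P) (v : ι → ℝ) :
    cov[fun ω => v ⬝ᵥ Z ω, W; P] = ∑ i, v i * cov[fun ω => Z ω i, W; P] :=
  covariance_sum_mul_left (Z := fun i ω => Z ω i) hZ hW v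

theorem covariance_dotProduct_right {Z : Ω → ι → ℝ} {W : Ω → ℝ}
    (hZ : ∀ i, MemLp (fun ω => Z ω i) 2 P) (hW : MemLp W 2 P) (v : ι → ℝ) :
    cov[W, fun ω => v ⬝ᵥ Z ω; P] = ∑ i, v i * cov[W, fun ω => Z ω i; P] := by
  rw [covariance_comm, covariance_dotProduct_left hZ hW]
  simp only [covariance_comm]

theorem covariance_const_add_sum_add_left {U : ι → Ω → ℝ} {R W : Ω → ℝ}
    (hU : ∀ i, MemLp (U i) 2 P) (hR : MemLp R 2 P) (hW : MemLp W 2 P) (a : ℝ) (l : ι → ℝ) :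
    cov[fun ω => a + ∑ k, l k * U k ω + R ω, W; P]
      = ∑ k, l k * cov[U k, W; P] + cov[R, W; P] := by
  have hlU : MemLp (fun ω => ∑ k, l k * U k ω) 2 P :=
    memLp_finsetSum _ fun k _ => (hU k).const_mul (l k)
  simp_rw [add_assoc]
  rw [← covariance_sum_mul_left hU hW]
  exact (covariance_const_add_left ((hlU.add hR).integrable one_le_two) a).trans
    (covariance_add_left hlU hR hW)

theorem forall_integral_mul_sub_eq_zero_iff [DecidableEq ι] {U : ι → Ω → ℝ} {X : Ω → κ → ℝ}
    (hU : ∀ i, MemLp (U i) 2 P) (hX : ∀ j, MemLp (fun ω => X ω j) 2 P)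
    {V : Matrix ι ι ℝ}
    (hV : ∀ i k, V i k = (∫ ω, U i ω * U k ω ∂P) - (∫ ω, U i ω ∂P) * (∫ ω, U k ω ∂P))
    (hVdet : IsUnit V.det) {C : Matrix ι κ ℝ}
    (hC : ∀ i j, C i j = (∫ ω, U i ω * X ω j ∂P) - (∫ ω, U i ω ∂P) * (∫ ω, X ω j ∂P))
    (a : ℝ) (l : ι → ℝ) (b : κ → ℝ) :
    (∀ i, (∫ ω, (a + (∑ k, l k * U k ω) + b ⬝ᵥ X ω) * U i ω ∂P)
        - (∫ ω, (a + (∑ k, l k * U k ω) + b ⬝ᵥ X ω) ∂P) * (∫ ω, U i ω ∂P) = 0) ↔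
      l = -((V⁻¹ * C) *ᵥ b) := by
  have hbX : MemLp (fun ω => b ⬝ᵥ X ω) 2 P :=
    memLp_finsetSum _ fun j _ => (hX j).const_mul (b j)
  have hF : MemLp (fun ω => a + (∑ k, l k * U k ω) + b ⬝ᵥ X ω) 2 P :=
    ((memLp_const a).add (memLp_finsetSum _ fun k _ => (hU k).const_mul (l k))).add hbX
  have hcov : ∀ i, (∫ ω, (a + (∑ k, l k * U k ω) + b ⬝ᵥ X ω) * U i ω ∂P)
      - (∫ ω, (a + (∑ k, l k * U k ω) + b ⬝ᵥ X ω) ∂P) * (∫ ω, U i ω ∂P)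
      = (V *ᵥ l + C *ᵥ b) i := fun i => by
    rw [← covariance_eq_integral_mul_sub hF (hU i), covariance_const_add_sum_add_left hU hbX (hU i),
      covariance_dotProduct_left hX (hU i)]
    simp only [Pi.add_apply, mulVec, dotProduct, hV, hC,
      ← covariance_eq_integral_mul_sub (hU i) (hU _),
      ← covariance_eq_integral_mul_sub (hU i) (hX _), covariance_comm (U i), mul_comm]
  simp only [hcov]
  refine (funext_iff (g := (0 : ι → ℝ))).symm.trans ?_
  rw [← mulVec_mulVec, ← mulVec_neg, add_eq_zero_iff_eq_neg]
  constructor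
  · intro h
    rw [← h, mulVec_mulVec, nonsing_inv_mul _ hVdet, one_mulVec]
  · intro h
    rw [h, mulVec_mulVec, mul_nonsing_inv _ hVdet, one_mulVec]

theorem integral_sq_bestLinearPredictor_le {Z : Ω → κ → ℝ} {Y : Ω → ℝ}
    (hZ : ∀ j, MemLp (fun ω => Z ω j) 2 P) (hY : MemLp Y 2 P) {β : κ → ℝ}
    (hβ : (of fun i j => cov[fun ω => Z ω i, fun ω => Z ω j; P]) *ᵥ β
      = fun i => cov[fun ω => Z ω i, Y; P])
    (a : ℝ) (b : κ → ℝ) :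
    ∫ ω, ((∫ ω, Y ω ∂P) - β ⬝ᵥ (fun j => ∫ ω, Z ω j ∂P) + β ⬝ᵥ Z ω - Y ω) ^ 2 ∂P
      ≤ ∫ ω, (a + b ⬝ᵥ Z ω - Y ω) ^ 2 ∂P := by
  have hZv : ∀ v : κ → ℝ, MemLp (fun ω => v ⬝ᵥ Z ω) 2 P := fun v =>
    memLp_finsetSum _ fun j _ => (hZ j).const_mul (v j)
  set W : Ω → ℝ := fun ω => β ⬝ᵥ Z ω - Y ω
  set D : Ω → ℝ := fun ω => (b - β) ⬝ᵥ Z ω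
  have hW : MemLp W 2 P := (hZv β).sub hY
  have horth : cov[W, D; P] = 0 := by
    -- the normal equations say exactly that `W` is uncorrelated with every `Z j`
    have hWZ : ∀ j, cov[W, fun ω => Z ω j; P] = 0 := fun j => by
      rw [covariance_fun_sub_left (hZv β) hY (hZ j), covariance_comm, covariance_comm Y,
        ← congrFun hβ j, sub_eq_zero, covariance_dotProduct_right hZ (hZ j)]
      simp only [mulVec, dotProduct, of_apply, mul_comm]
    rw [covariance_dotProduct_right hZ hW]
    exact Finset.sum_eq_zero fun j _ => by rw [hWZ, mul_zero]
  have hmeanW : ∫ ω, W ω ∂P = β ⬝ᵥ (fun j => ∫ ω, Z ω j ∂P) - ∫ ω, Y ω ∂P := by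
    rw [integral_sub ((hZv β).integrable one_le_two) (hY.integrable one_le_two)]
    simp only [dotProduct]
    rw [integral_finsetSum _ fun j _ => ((hZ j).const_mul _).integrable one_le_two]
    simp only [integral_const_mul]
  calc _ = Var[W; P] := by
        rw [variance_eq_integral hW.aemeasurable, hmeanW]
        congr 1 with ω
        ring
    _ ≤ Var[W; P] + 2 * cov[W, D; P] + Var[D; P] := by
        rw [horth]; linarith [variance_nonneg D P]
    _ = Var[fun ω => a + (b ⬝ᵥ Z ω - Y ω); P] := by
        rw [← variance_add hW (hZv (b - β)), variance_const_add]
        · congr 1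
          ext ω
          simp only [W, Pi.add_apply, sub_dotProduct]
          ring
        · exact ((hZv b).sub hY).aestronglyMeasurable
    _ ≤ ∫ ω, (a + b ⬝ᵥ Z ω - Y ω) ^ 2 ∂P := by
        simp_rw [add_sub_assoc]
        exact variance_le_expectation_sq (((hZv b).sub hY).aestronglyMeasurable.const_add a)

end SecondMoments

def meanContrast {n d : ℕ} (μv : Fin (n + 1) → Fin d → ℝ) : Matrix (Fin n) (Fin d) ℝ :=
  of fun k j => μv k.castSucc j - μv (Fin.last n) j

section MixtureModel

variable {Ω : Type*} {n d : ℕ} {S : Ω → Fin (n + 1)} {p : Fin (n + 1) → ℝ}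
  {U : Fin n → Ω → ℝ} {X : Ω → Fin d → ℝ} {μv : Fin (n + 1) → Fin d → ℝ}

theorem sum_meanContrast_mulVec_mul_dummy (hp1 : ∑ s, p s = 1)
    (hU : ∀ i ω, U i ω = (if S ω = i.castSucc then 1 else 0) - p i.castSucc)
    (b : Fin d → ℝ) (ω : Ω) :
    ∑ k, (meanContrast μv *ᵥ b) k * U k ω = b ⬝ᵥ μv (S ω) - b ⬝ᵥ ∑ s, p s • μv s := by
  have hN : ∀ k, (meanContrast μv *ᵥ b) k = b ⬝ᵥ μv k.castSucc - b ⬝ᵥ μv (Fin.last n) :=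
    fun k => by
      simp only [mulVec, meanContrast, dotProduct, of_apply, ← Finset.sum_sub_distrib]
      exact Finset.sum_congr rfl fun j _ => by ring
  simp only [hN, hU, dotProduct_sum, dotProduct_smul, smul_eq_mul]
  exact sum_sub_last_mul_indicator_sub hp1 (fun s => b ⬝ᵥ μv s) (S ω)

theorem forecast_neg_meanContrast_eq (hp1 : ∑ s, p s = 1)
    (hU : ∀ i ω, U i ω = (if S ω = i.castSucc then 1 else 0) - p i.castSucc)
    (a : ℝ) (b : Fin d → ℝ) (ω : Ω) :
    a + ∑ k, (-(meanContrast μv *ᵥ b)) k * U k ω + b ⬝ᵥ X ω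
      = a + b ⬝ᵥ ∑ s, p s • μv s + b ⬝ᵥ (X ω - μv (S ω)) := by
  simp only [Pi.neg_apply, neg_mul, Finset.sum_neg_distrib,
    sum_meanContrast_mulVec_mul_dummy hp1 hU, dotProduct_sub]
  ring

variable [MeasurableSpace Ω] {P : Measure Ω}

theorem posDef_of_condCovariance (hS : Measurable S) (hp : ∀ s, 0 < p s)
    (hXc : ∀ j, MemLp (fun ω => X ω j - μv (S ω) j) 2 P)
    (hcond : ∀ (g : Fin (n + 1) → ℝ) j, ∫ ω, g (S ω) * (X ω j - μv (S ω) j) ∂P = 0)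
    {Sig : Fin (n + 1) → Matrix (Fin d) (Fin d) ℝ}
    (hcovX : ∀ s i j,
      ∫ ω in {ω | S ω = s}, (X ω i - μv s i) * (X ω j - μv s j) ∂P = p s * Sig s i j)
    (hSigPD : ∀ s, (Sig s).PosDef) {Vc : Matrix (Fin d) (Fin d) ℝ}
    (hVc : ∀ i j, Vc i j =
      (∫ ω, (X ω i - μv (S ω) i) * (X ω j - μv (S ω) j) ∂P)
        - (∫ ω, (X ω i - μv (S ω) i) ∂P) * (∫ ω, (X ω j - μv (S ω) j) ∂P)) :
    Vc.PosDef := by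
  have hmean : ∀ j, ∫ ω, (X ω j - μv (S ω) j) ∂P = 0 := fun j => by
    simpa using hcond 1 j
  have hsum : Vc = ∑ s, p s • Sig s := by
    ext i j
    rw [hVc, hmean, zero_mul, sub_zero, integral_eq_sum_setIntegral_fiber
      (f := fun ω => (X ω i - μv (S ω) i) * (X ω j - μv (S ω) j)) hS
      ((hXc i).integrable_mul (hXc j))]
    simp only [Matrix.sum_apply, Matrix.smul_apply, smul_eq_mul, ← hcovX]
    exact Finset.sum_congr rfl fun s _ =>
      setIntegral_fiber_comp hS (fun t ω => (X ω i - μv t i) * (X ω j - μv t j)) s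
  rw [hsum]
  exact posDef_sum Finset.univ_nonempty fun s _ => (hSigPD s).smul (hp s)

variable [IsProbabilityMeasure P]

theorem integral_dummy_mul_comp (hS : Measurable S) (hpP : ∀ s, P.real {ω | S ω = s} = p s)
    (hU : ∀ i ω, U i ω = (if S ω = i.castSucc then 1 else 0) - p i.castSucc)
    (i : Fin n) (h : Fin (n + 1) → ℝ) :
    ∫ ω, U i ω * h (S ω) ∂P = p i.castSucc * (h i.castSucc - ∑ s, p s * h s) := by
  simp_rw [hU i]
  rw [integral_comp_eq_sum hS
    (fun s => ((if s = i.castSucc then 1 else 0) - p i.castSucc) * h s)]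
  simp only [hpP, ← mul_assoc]
  exact sum_mul_indicator_sub_mul p i.castSucc h

theorem integral_dummy (hS : Measurable S) (hpP : ∀ s, P.real {ω | S ω = s} = p s)
    (hp1 : ∑ s, p s = 1)
    (hU : ∀ i ω, U i ω = (if S ω = i.castSucc then 1 else 0) - p i.castSucc) (i : Fin n) :
    ∫ ω, U i ω ∂P = 0 := by
  simpa [hp1] using integral_dummy_mul_comp (P := P) hS hpP hU i 1

theorem memLp_dummy (hS : Measurable S)
    (hU : ∀ i ω, U i ω = (if S ω = i.castSucc then 1 else 0) - p i.castSucc) (i : Fin n) :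
    MemLp (U i) 2 P := by
  rw [show U i = fun ω => (if S ω = i.castSucc then 1 else 0) - p i.castSucc from funext (hU i)]
  exact MemLp.of_discrete.comp_of_map
    (g := fun s => (if s = i.castSucc then 1 else 0) - p i.castSucc) hS.aemeasurable

theorem isUnit_det_of_dummy (hS : Measurable S) (hpP : ∀ s, P.real {ω | S ω = s} = p s)
    (hp : ∀ s, 0 < p s) (hp1 : ∑ s, p s = 1)
    (hU : ∀ i ω, U i ω = (if S ω = i.castSucc then 1 else 0) - p i.castSucc)
    {V : Matrix (Fin n) (Fin n) ℝ}
    (hV : ∀ i k, V i k = (∫ ω, U i ω * U k ω ∂P) - (∫ ω, U i ω ∂P) * (∫ ω, U k ω ∂P)) :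
    IsUnit V.det := by
  have hV' : V = diagonal (fun k => p k.castSucc)
      - vecMulVec (fun k => p k.castSucc) (fun k => p k.castSucc) := by
    ext i k
    rw [hV, integral_dummy hS hpP hp1 hU, zero_mul, sub_zero]
    simp_rw [hU k]
    rw [integral_dummy_mul_comp hS hpP hU i
      fun s => (if s = k.castSucc then 1 else 0) - p k.castSucc]
    simp only [mul_sub, mul_ite, mul_one, mul_zero, Finset.sum_sub_distrib, Finset.sum_ite_eq',
      Finset.mem_univ, if_true, ← Finset.sum_mul, hp1, one_mul, Fin.castSucc_inj, sub_self,
      sub_zero, diagonal_apply, vecMulVec_apply, Matrix.sub_apply]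
  have hlast : 1 - ∑ k : Fin n, p k.castSucc = p (Fin.last n) := by
    rw [← hp1, Fin.sum_univ_castSucc]
    ring
  rw [hV', det_diagonal_sub_vecMulVec_self, hlast, isUnit_iff_ne_zero]
  exact mul_ne_zero (Finset.prod_ne_zero_iff.mpr fun k _ => (hp _).ne') (hp _).ne'

theorem covariance_dotProduct_sub_condMean_dummy_eq_zero (hS : Measurable S)
    (hpP : ∀ s, P.real {ω | S ω = s} = p s) (hp1 : ∑ s, p s = 1)
    (hU : ∀ i ω, U i ω = (if S ω = i.castSucc then 1 else 0) - p i.castSucc)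
    (hXc : ∀ j, MemLp (fun ω => X ω j - μv (S ω) j) 2 P)
    (hcond : ∀ (g : Fin (n + 1) → ℝ) j, ∫ ω, g (S ω) * (X ω j - μv (S ω) j) ∂P = 0)
    (v : Fin d → ℝ) (i : Fin n) :
    cov[fun ω => v ⬝ᵥ (X ω - μv (S ω)), U i; P] = 0 := by
  rw [covariance_dotProduct_left (Z := fun ω => X ω - μv (S ω)) hXc (memLp_dummy hS hU i)]
  refine Finset.sum_eq_zero fun j _ => ?_
  simp only [Pi.sub_apply]
  rw [covariance_eq_integral_mul_sub (hXc j) (memLp_dummy hS hU i),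
    integral_dummy hS hpP hp1 hU, mul_zero, sub_zero]
  simp only [hU i, mul_comm (X _ j - _)]
  rw [hcond (fun s => (if s = i.castSucc then 1 else 0) - p i.castSucc) j, mul_zero]

theorem inv_mul_eq_meanContrast (hS : Measurable S)
    (hpP : ∀ s, P.real {ω | S ω = s} = p s) (hp1 : ∑ s, p s = 1)
    (hU : ∀ i ω, U i ω = (if S ω = i.castSucc then 1 else 0) - p i.castSucc)
    (hX : ∀ j, MemLp (fun ω => X ω j) 2 P) (hXc : ∀ j, MemLp (fun ω => X ω j - μv (S ω) j) 2 P)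
    (hcond : ∀ (g : Fin (n + 1) → ℝ) j, ∫ ω, g (S ω) * (X ω j - μv (S ω) j) ∂P = 0)
    {V : Matrix (Fin n) (Fin n) ℝ}
    (hV : ∀ i k, V i k = (∫ ω, U i ω * U k ω ∂P) - (∫ ω, U i ω ∂P) * (∫ ω, U k ω ∂P))
    (hVdet : IsUnit V.det) {C : Matrix (Fin n) (Fin d) ℝ}
    (hC : ∀ i j, C i j = (∫ ω, U i ω * X ω j ∂P) - (∫ ω, U i ω ∂P) * (∫ ω, X ω j ∂P)) :
    V⁻¹ * C = meanContrast μv := by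
  have hU2 := memLp_dummy (P := P) hS hU
  suffices hCV : C = V * meanContrast μv by
    rw [hCV, ← Matrix.mul_assoc, nonsing_inv_mul _ hVdet, Matrix.one_mul]
  refine mulVec_injective (funext fun b => funext fun i => ?_)
  have hdecomp : ∀ ω, b ⬝ᵥ X ω = b ⬝ᵥ ∑ s, p s • μv s + ∑ k, (meanContrast μv *ᵥ b) k * U k ω
      + b ⬝ᵥ (X ω - μv (S ω)) := fun ω => by
    rw [sum_meanContrast_mulVec_mul_dummy hp1 hU, dotProduct_sub]
    ring
  calc (C *ᵥ b) i = cov[fun ω => b ⬝ᵥ X ω, U i; P] := by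
        rw [covariance_dotProduct_left hX (hU2 i)]
        simp only [mulVec, dotProduct, hC, ← covariance_eq_integral_mul_sub (hU2 i) (hX _),
          covariance_comm (U i), mul_comm]
    _ = cov[fun ω => b ⬝ᵥ ∑ s, p s • μv s + ∑ k, (meanContrast μv *ᵥ b) k * U k ω
          + b ⬝ᵥ (X ω - μv (S ω)), U i; P] := by
        simp only [← hdecomp]
    _ = ((V * meanContrast μv) *ᵥ b) i := by
        rw [covariance_const_add_sum_add_left (R := fun ω => b ⬝ᵥ (X ω - μv (S ω))) hU2
          (memLp_finsetSum _ fun j _ => (hXc j).const_mul (b j)) (hU2 i),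
          covariance_dotProduct_sub_condMean_dummy_eq_zero hS hpP hp1 hU hXc hcond, add_zero,
          ← mulVec_mulVec]
        simp only [mulVec, dotProduct, hV, ← covariance_eq_integral_mul_sub (hU2 i) (hU2 _),
          covariance_comm (U i), mul_comm]

theorem integral_sq_mean_add_dotProduct_sub_condMean_le (hS : Measurable S)
    (hp : ∀ s, 0 < p s) {Y : Ω → ℝ} (hY : MemLp Y 2 P)
    (hXc : ∀ j, MemLp (fun ω => X ω j - μv (S ω) j) 2 P)
    (hcond : ∀ (g : Fin (n + 1) → ℝ) j, ∫ ω, g (S ω) * (X ω j - μv (S ω) j) ∂P = 0)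
    {Sig : Fin (n + 1) → Matrix (Fin d) (Fin d) ℝ}
    (hcovX : ∀ s i j,
      ∫ ω in {ω | S ω = s}, (X ω i - μv s i) * (X ω j - μv s j) ∂P = p s * Sig s i j)
    (hSigPD : ∀ s, (Sig s).PosDef) {Vc : Matrix (Fin d) (Fin d) ℝ}
    (hVc : ∀ i j, Vc i j =
      (∫ ω, (X ω i - μv (S ω) i) * (X ω j - μv (S ω) j) ∂P)
        - (∫ ω, (X ω i - μv (S ω) i) ∂P) * (∫ ω, (X ω j - μv (S ω) j) ∂P))
    {cv : Fin d → ℝ}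
    (hcv : ∀ i, cv i =
      (∫ ω, (X ω i - μv (S ω) i) * Y ω ∂P)
        - (∫ ω, (X ω i - μv (S ω) i) ∂P) * (∫ ω, Y ω ∂P))
    {β : Fin d → ℝ} (hβ : β = Vc⁻¹ *ᵥ cv) (c : ℝ) (b : Fin d → ℝ) :
    ∫ ω, ((∫ ω, Y ω ∂P) + β ⬝ᵥ (X ω - μv (S ω)) - Y ω) ^ 2 ∂P
      ≤ ∫ ω, (c + b ⬝ᵥ (X ω - μv (S ω)) - Y ω) ^ 2 ∂P := by
  have hVcPD := posDef_of_condCovariance hS hp hXc hcond hcovX hSigPD hVc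
  have hVc' : Vc = of fun i j =>
      cov[fun ω => (X ω - μv (S ω)) i, fun ω => (X ω - μv (S ω)) j; P] :=
    ext fun i j => (hVc i j).trans (covariance_eq_integral_mul_sub (hXc i) (hXc j)).symm
  have hcv' : cv = fun i => cov[fun ω => (X ω - μv (S ω)) i, Y; P] :=
    funext fun i => (hcv i).trans (covariance_eq_integral_mul_sub (hXc i) hY).symm
  have hnormal : Vc *ᵥ β = cv := by
    rw [hβ, mulVec_mulVec, mul_nonsing_inv _ (isUnit_iff_ne_zero.mpr hVcPD.det_pos.ne'),
      one_mulVec]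
  have hmean : (fun j => ∫ ω, (X ω - μv (S ω)) j ∂P) = 0 :=
    funext fun j => by simpa using hcond 1 j
  have h := integral_sq_bestLinearPredictor_le (Z := fun ω => X ω - μv (S ω)) hXc hY
    (hVc' ▸ hcv' ▸ hnormal) c b
  rwa [hmean, dotProduct_zero, sub_zero] at h

end MixtureModel

theorem stmt13_general
    {Ω : Type*} [MeasurableSpace Ω] (P : Measure Ω) [IsProbabilityMeasure P]
    (n d : ℕ) (S : Ω → Fin (n + 1)) (hS : Measurable S)
    (X : Ω → Fin d → ℝ) (Y : Ω → ℝ)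
    (p : Fin (n + 1) → ℝ) (μv : Fin (n + 1) → Fin d → ℝ)
    (Sig : Fin (n + 1) → Matrix (Fin d) (Fin d) ℝ)
    (hp : ∀ s, 0 < p s)
    (hmeas : ∀ s, P {ω | S ω = s} = ENNReal.ofReal (p s))
    (hmean : ∀ s i, ∫ ω in {ω | S ω = s}, X ω i ∂P = p s * μv s i)
    (hcovX : ∀ s i j,
      ∫ ω in {ω | S ω = s}, (X ω i - μv s i) * (X ω j - μv s j) ∂P = p s * Sig s i j)
    (hSigPD : ∀ s, (Sig s).PosDef)
    (μbar : Fin d → ℝ) (hμbar : μbar = ∑ s, p s • μv s)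
    -- centered bank dummies
    (U : Fin n → Ω → ℝ)
    (hU : ∀ i ω, U i ω = (if S ω = i.castSucc then 1 else 0) - p i.castSucc)
    (hint : ∀ (a : ℝ) (l : Fin n → ℝ) (b : Fin d → ℝ),
      Integrable (fun ω => (a + (∑ k, l k * U k ω) + b ⬝ᵥ X ω - Y ω) ^ 2) P)
    -- M = var[U(S)]⁻¹ cov[U(S), X_S]
    (VarU : Matrix (Fin n) (Fin n) ℝ)
    (hVarU : ∀ i j, VarU i j =
      (∫ ω, U i ω * U j ω ∂P) - (∫ ω, U i ω ∂P) * (∫ ω, U j ω ∂P))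
    (covUX : Matrix (Fin n) (Fin d) ℝ)
    (hcovUX : ∀ i j, covUX i j =
      (∫ ω, U i ω * X ω j ∂P) - (∫ ω, U i ω ∂P) * (∫ ω, X ω j ∂P))
    (M : Matrix (Fin n) (Fin d) ℝ) (hM : M = VarU⁻¹ * covUX)
    -- FEO coefficient and intercept
    (Vc : Matrix (Fin d) (Fin d) ℝ)
    (hVc : ∀ i j, Vc i j =
      (∫ ω, (X ω i - μv (S ω) i) * (X ω j - μv (S ω) j) ∂P)
        - (∫ ω, (X ω i - μv (S ω) i) ∂P) * (∫ ω, (X ω j - μv (S ω) j) ∂P))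
    (cv : Fin d → ℝ)
    (hcv : ∀ i, cv i =
      (∫ ω, (X ω i - μv (S ω) i) * Y ω ∂P)
        - (∫ ω, (X ω i - μv (S ω) i) ∂P) * (∫ ω, Y ω ∂P))
    (βF : Fin d → ℝ) (hβF : βF = Vc⁻¹ *ᵥ cv)
    (αF : ℝ) (hαF : αF = (∫ ω, Y ω ∂P) - βF ⬝ᵥ μbar)
    (lSEO : Fin n → ℝ) (hlSEO : lSEO = -(M *ᵥ βF)) :
    -- the SEO forecast satisfies the weak demographic parity constraint
    (∀ i, (∫ ω, (αF + (∑ k, lSEO k * U k ω) + βF ⬝ᵥ X ω) * U i ω ∂P)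
        - (∫ ω, (αF + (∑ k, lSEO k * U k ω) + βF ⬝ᵥ X ω) ∂P) * (∫ ω, U i ω ∂P) = 0) ∧
    -- and minimizes the squared loss among all constrained forecasts of this form
    (∀ (a : ℝ) (l : Fin n → ℝ) (b : Fin d → ℝ),
      (∀ i, (∫ ω, (a + (∑ k, l k * U k ω) + b ⬝ᵥ X ω) * U i ω ∂P)
          - (∫ ω, (a + (∑ k, l k * U k ω) + b ⬝ᵥ X ω) ∂P) * (∫ ω, U i ω ∂P) = 0) →
      ∫ ω, (αF + (∑ k, lSEO k * U k ω) + βF ⬝ᵥ X ω - Y ω) ^ 2 ∂P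
        ≤ ∫ ω, (a + (∑ k, l k * U k ω) + b ⬝ᵥ X ω - Y ω) ^ 2 ∂P) := by
  have hpP : ∀ s, P.real {ω | S ω = s} = p s := fun s => by
    rw [measureReal_def, hmeas, ENNReal.toReal_ofReal (hp s).le]
  have hp1 : ∑ s, p s = 1 := by
    simpa [hpP] using (integral_comp_eq_sum (P := P) hS fun _ => (1 : ℝ)).symm
  obtain ⟨hY2, hX2⟩ := memLp_of_integrable_sq_forecast hint
  have hXc2 : ∀ j, MemLp (fun ω => X ω j - μv (S ω) j) 2 P := fun j =>
    (hX2 j).sub (MemLp.of_discrete.comp_of_map (g := fun s => μv s j) hS.aemeasurable)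
  have hcond : ∀ (g : Fin (n + 1) → ℝ) j, ∫ ω, g (S ω) * (X ω j - μv (S ω) j) ∂P = 0 :=
    fun g j => integral_comp_mul_sub_eq_zero hS ((hX2 j).integrable one_le_two)
      (fun s => by rw [hpP]; exact hmean s j) g
  have hVdet := isUnit_det_of_dummy hS hpP hp hp1 hU hVarU
  have hMN : M = meanContrast μv :=
    hM.trans (inv_mul_eq_meanContrast hS hpP hp1 hU hX2 hXc2 hcond hVarU hVdet hcovUX)
  have hcon := fun a l b =>
    hM ▸ forall_integral_mul_sub_eq_zero_iff (memLp_dummy hS hU) hX2 hVarU hVdet hcovUX a l b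
  refine ⟨(hcon αF lSEO βF).2 hlSEO, fun a l b h => ?_⟩
  rw [(hcon a l b).1 h, hlSEO, hMN]
  simp_rw [forecast_neg_meanContrast_eq hp1 hU, ← hμbar, hαF, sub_add_cancel]
  exact integral_sq_mean_add_dotProduct_sub_condMean_le hS hp hY2 hXc2 hcond hcovX hSigPD hVc
    hcv hβF _ b

/-- Among forecasts of the form `Ŷ = α + λᵀU(S) + βᵀX_S` satisfying the
weak-demographic-parity constraint `cov[Ŷ, U(S)] = 0`, the squared loss is minimized by
the SEO forecast: `β = β_F`, `λ = −Mβ_F`, `α = α_F`, where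
`M = var[U(S)]⁻¹ cov[U(S), X_S]`. -/
theorem stmt13
    {Ω : Type*} [MeasurableSpace Ω] (P : Measure Ω) [IsProbabilityMeasure P]
    (n d : ℕ) (S : Ω → Fin (n + 1)) (hS : Measurable S)
    (X : Ω → Fin d → ℝ) (Y : Ω → ℝ) (ε : Ω → ℝ)
    (p : Fin (n + 1) → ℝ) (μv : Fin (n + 1) → Fin d → ℝ)
    (Sig : Fin (n + 1) → Matrix (Fin d) (Fin d) ℝ)
    (αb : Fin (n + 1) → ℝ) (βb : Fin (n + 1) → Fin d → ℝ)
    (hp : ∀ s, 0 < p s)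
    (hmeas : ∀ s, P {ω | S ω = s} = ENNReal.ofReal (p s))
    (hmean : ∀ s i, ∫ ω in {ω | S ω = s}, X ω i ∂P = p s * μv s i)
    (hcovX : ∀ s i j,
      ∫ ω in {ω | S ω = s}, (X ω i - μv s i) * (X ω j - μv s j) ∂P = p s * Sig s i j)
    (hSigPD : ∀ s, (Sig s).PosDef)
    (hY : ∀ ω, Y ω = αb (S ω) + βb (S ω) ⬝ᵥ X ω + ε ω)
    (hε : ∀ s, ∫ ω in {ω | S ω = s}, ε ω ∂P = 0)
    (hXε : ∀ s i, ∫ ω in {ω | S ω = s}, (X ω i - μv s i) * ε ω ∂P = 0)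
    (μbar : Fin d → ℝ) (hμbar : μbar = ∑ s, p s • μv s)
    -- centered bank dummies
    (U : Fin n → Ω → ℝ)
    (hU : ∀ i ω, U i ω = (if S ω = i.castSucc then 1 else 0) - p i.castSucc)
    (hint : ∀ (a : ℝ) (l : Fin n → ℝ) (b : Fin d → ℝ),
      Integrable (fun ω => (a + (∑ k, l k * U k ω) + b ⬝ᵥ X ω - Y ω) ^ 2) P)
    -- M = var[U(S)]⁻¹ cov[U(S), X_S]
    (VarU : Matrix (Fin n) (Fin n) ℝ)
    (hVarU : ∀ i j, VarU i j =
      (∫ ω, U i ω * U j ω ∂P) - (∫ ω, U i ω ∂P) * (∫ ω, U j ω ∂P))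
    (covUX : Matrix (Fin n) (Fin d) ℝ)
    (hcovUX : ∀ i j, covUX i j =
      (∫ ω, U i ω * X ω j ∂P) - (∫ ω, U i ω ∂P) * (∫ ω, X ω j ∂P))
    (M : Matrix (Fin n) (Fin d) ℝ) (hM : M = VarU⁻¹ * covUX)
    -- FEO coefficient and intercept
    (Vc : Matrix (Fin d) (Fin d) ℝ)
    (hVc : ∀ i j, Vc i j =
      (∫ ω, (X ω i - μv (S ω) i) * (X ω j - μv (S ω) j) ∂P)
        - (∫ ω, (X ω i - μv (S ω) i) ∂P) * (∫ ω, (X ω j - μv (S ω) j) ∂P))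
    (cv : Fin d → ℝ)
    (hcv : ∀ i, cv i =
      (∫ ω, (X ω i - μv (S ω) i) * Y ω ∂P)
        - (∫ ω, (X ω i - μv (S ω) i) ∂P) * (∫ ω, Y ω ∂P))
    (βF : Fin d → ℝ) (hβF : βF = Vc⁻¹ *ᵥ cv)
    (αF : ℝ) (hαF : αF = (∫ ω, Y ω ∂P) - βF ⬝ᵥ μbar)
    (lSEO : Fin n → ℝ) (hlSEO : lSEO = -(M *ᵥ βF)) :
    -- the SEO forecast satisfies the weak demographic parity constraint
    (∀ i, (∫ ω, (αF + (∑ k, lSEO k * U k ω) + βF ⬝ᵥ X ω) * U i ω ∂P)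
        - (∫ ω, (αF + (∑ k, lSEO k * U k ω) + βF ⬝ᵥ X ω) ∂P) * (∫ ω, U i ω ∂P) = 0) ∧
    -- and minimizes the squared loss among all constrained forecasts of this form
    (∀ (a : ℝ) (l : Fin n → ℝ) (b : Fin d → ℝ),
      (∀ i, (∫ ω, (a + (∑ k, l k * U k ω) + b ⬝ᵥ X ω) * U i ω ∂P)
          - (∫ ω, (a + (∑ k, l k * U k ω) + b ⬝ᵥ X ω) ∂P) * (∫ ω, U i ω ∂P) = 0) →
      ∫ ω, (αF + (∑ k, lSEO k * U k ω) + βF ⬝ᵥ X ω - Y ω) ^ 2 ∂P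
        ≤ ∫ ω, (a + (∑ k, l k * U k ω) + b ⬝ᵥ X ω - Y ω) ^ 2 ∂P) :=
  stmt13_general P n d S hS X Y p μv Sig hp hmeas hmean hcovX hSigPD μbar hμbar U hU hint VarU hVarU
    covUX hcovUX M hM Vc hVc cv hcv βF hβF αF hαF lSEO hlSEO
end

section
/- If f: ℝ^{S̄} → ℝ satisfies (i) f(kb) = k f(b) for all k ∈ ℝ and b ∈ ℝ^{S̄}, (ii) f(b,…,b) = b for at least one nonzero b ∈ ℝ, (iii) f(b₁,…,b_{S̄}) ≥ 0 whenever all b_s > 0, and (iv) f is differentiable at 0, then f is a convex combination of its arguments: f(b) = Σ_i w_i b_i with w_i ≥ 0 and Σ_i w_i = 1. -/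
/-!
Differentiating `t ↦ f (t • b) = t * f b` at `t = 0` shows that a homogeneous function
differentiable at the origin coincides with its derivative there, so `f b = ∑ i, w i * b i`
with `w i = f (Pi.single i 1)`. The weights are nonnegative because `f` is continuous and
nonnegative on the positive orthant, hence on its closure, which contains each `Pi.single i 1`;
they sum to `1` because homogeneity and `f (fun _ => c) = c` with `c ≠ 0` give `f 1 = 1`.
-/

open Filter Topology

theorem fderiv_zero_apply_of_homogeneous {𝕜 E F : Type*} [NontriviallyNormedField 𝕜]
    [NormedAddCommGroup E] [NormedSpace 𝕜 E] [NormedAddCommGroup F] [NormedSpace 𝕜 F]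
    {f : E → F} (hf : ∀ (k : 𝕜) (x : E), f (k • x) = k • f x) (hd : DifferentiableAt 𝕜 f 0)
    (x : E) : fderiv 𝕜 f 0 x = f x := by
  have hchain : HasDerivAt (fun t : 𝕜 => f (t • x)) (fderiv 𝕜 f 0 x) 0 := by
    have hline : HasDerivAt (fun t : 𝕜 => t • x) x 0 := by
      simpa using (hasDerivAt_id (0 : 𝕜)).smul_const x
    have hF : HasFDerivAt f (fderiv 𝕜 f 0) ((0 : 𝕜) • x) := by
      rw [zero_smul]
      exact hd.hasFDerivAt
    exact hF.comp_hasDerivAt 0 hline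
  have hray : HasDerivAt (fun t : 𝕜 => f (t • x)) (f x) 0 := by
    simp_rw [hf]
    simpa using (hasDerivAt_id (0 : 𝕜)).smul_const (f x)
  exact hchain.unique hray

theorem LinearMap.apply_eq_sum_apply_single_mul {R ι : Type*} [CommSemiring R] [Fintype ι]
    [DecidableEq ι] (L : (ι → R) →ₗ[R] R) (x : ι → R) :
    L x = ∑ i, L (Pi.single i 1) * x i := by
  conv_lhs => rw [← Finset.univ_sum_single x]
  refine (map_sum L _ _).trans (Finset.sum_congr rfl fun i _ => ?_)
  rw [mul_comm, ← smul_eq_mul, ← map_smul, ← Pi.single_smul', smul_eq_mul, mul_one]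

theorem nonneg_of_continuousAt_of_forall_pos {ι : Type*} {g : (ι → ℝ) → ℝ}
    (hpos : ∀ b, (∀ s, 0 < b s) → 0 ≤ g b) {b : ι → ℝ} (hb : 0 ≤ b)
    (hg : ContinuousAt g b) : 0 ≤ g b := by
  have hshift : Tendsto (fun ε : ℝ => b + ε • (1 : ι → ℝ)) (𝓝[>] 0) (𝓝 b) := by
    have hcont : Continuous fun ε : ℝ => b + ε • (1 : ι → ℝ) := by fun_prop
    simpa using (hcont.tendsto 0).mono_left (nhdsWithin_le_nhds (s := Set.Ioi 0))
  refine ge_of_tendsto (hg.tendsto.comp hshift) ?_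
  filter_upwards [self_mem_nhdsWithin] with ε (hε : 0 < ε)
  exact hpos _ fun s => by simpa using add_pos_of_nonneg_of_pos (hb s) hε

theorem stmt18_general
    (n : ℕ) (f : (Fin n → ℝ) → ℝ)
    (h1 : ∀ (k : ℝ) (b : Fin n → ℝ), f (k • b) = k * f b)
    (h2 : ∃ b : ℝ, b ≠ 0 ∧ f (fun _ => b) = b)
    (h3 : ∀ b : Fin n → ℝ, (∀ s, 0 < b s) → 0 ≤ f b)
    (h4 : DifferentiableAt ℝ f 0) :
    ∃ w : Fin n → ℝ, (∀ i, 0 ≤ w i) ∧ (∑ i, w i = 1) ∧ ∀ b, f b = ∑ i, w i * b i := by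
  have hderiv : ⇑(fderiv ℝ f 0) = f :=
    funext (fderiv_zero_apply_of_homogeneous (by simpa only [smul_eq_mul] using h1) h4)
  have hlin : ∀ b, f b = ∑ i, f (Pi.single i 1) * b i := by
    simpa only [ContinuousLinearMap.coe_coe, hderiv] using
      ((fderiv ℝ f 0 : (Fin n → ℝ) →ₗ[ℝ] ℝ).apply_eq_sum_apply_single_mul)
  have hone : f 1 = 1 := by
    obtain ⟨c, hc, hfc⟩ := h2
    have hscale : f (c • 1) = c * f 1 := h1 c 1
    have hconst : (c • 1 : Fin n → ℝ) = fun _ => c := by ext; simp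
    rw [hconst, hfc] at hscale
    exact (mul_eq_left₀ hc).1 hscale.symm
  refine ⟨fun i => f (Pi.single i 1), fun i => ?_, by simpa [hone] using (hlin 1).symm, hlin⟩
  exact nonneg_of_continuousAt_of_forall_pos h3 (Pi.single_nonneg.2 zero_le_one)
    (hderiv ▸ (fderiv ℝ f 0).continuous.continuousAt)

/-- An aggregation function that is homogeneous, agrees with its arguments on some nonzero
constant vector, is nonnegative on positive vectors, and is differentiable at `0`, must be
a convex combination of its arguments. -/
theorem stmt18
    (n : ℕ) (hn : 0 < n) (f : (Fin n → ℝ) → ℝ)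
    (h1 : ∀ (k : ℝ) (b : Fin n → ℝ), f (k • b) = k * f b)
    (h2 : ∃ b : ℝ, b ≠ 0 ∧ f (fun _ => b) = b)
    (h3 : ∀ b : Fin n → ℝ, (∀ s, 0 < b s) → 0 ≤ f b)
    (h4 : DifferentiableAt ℝ f 0) :
    ∃ w : Fin n → ℝ, (∀ i, 0 ≤ w i) ∧ (∑ i, w i = 1) ∧ ∀ b, f b = ∑ i, w i * b i :=
  stmt18_general n f h1 h2 h3 h4
end
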